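/- Let p be an odd prime and let G_E be the multi-EGS group defined by a datum E = (E^{(1)},…,E^{(p)}). Set N_E = ⟨a⟩ ∪ ⋃_{l=1}^{p} B_l, where B_l = ⟨b^{(l)}_1,…,b^{(l)}_{r_l}⟩. Then N_E is a quasinucleus with constant k = 2: for all n₁, n₂ ∈ N_E and every word v ∈ X² of length 2, the section (n₁n₂)|_v belongs to N_E. -/

import Mathlib

/-- An automorphism of the rooted `p`-ary tree, encoded by its portrait:
at every vertex (a finite word over `Fin p`) it records the permutation of the
`p` subtrees hanging at that vertex. -/
@[ext]
structure TreeAut (p : ℕ) where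
  perm : List (Fin p) → Equiv.Perm (Fin p)

namespace TreeAut

variable {p : ℕ}

/-- The section of a tree automorphism at a first-level vertex `x`. -/
def sect (g : TreeAut p) (x : Fin p) : TreeAut p := ⟨fun v => g.perm (x :: v)⟩

/-- The section of a tree automorphism at an arbitrary vertex. -/
def sectV (g : TreeAut p) : List (Fin p) → TreeAut p
  | [] => g
  | x :: v => (g.sect x).sectV v

/-- The action of a tree automorphism on vertices (finite words over `Fin p`). -/
def act (g : TreeAut p) : List (Fin p) → List (Fin p)
  | [] => []
  | x :: v => g.perm [] x :: (g.sect x).act v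

/-- The inverse of the action of a tree automorphism on vertices. -/
def actInv (g : TreeAut p) : List (Fin p) → List (Fin p)
  | [] => []
  | x :: v => (g.perm []).symm x :: (g.sect ((g.perm []).symm x)).actInv v

instance : One (TreeAut p) := ⟨⟨fun _ => 1⟩⟩

/-- Composition convention as in the paper: `g * h` acts by `g` first, then `h`. -/
instance : Mul (TreeAut p) := ⟨fun g h => ⟨fun v => (g.perm v).trans (h.perm (g.act v))⟩⟩

instance : Inv (TreeAut p) := ⟨fun g => ⟨fun v => (g.perm (g.actInv v)).symm⟩⟩

theorem perm_one (v : List (Fin p)) : (1 : TreeAut p).perm v = 1 := rfl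

theorem perm_mul (g h : TreeAut p) (v : List (Fin p)) :
    (g * h).perm v = (g.perm v).trans (h.perm (g.act v)) := rfl

theorem perm_inv (g : TreeAut p) (v : List (Fin p)) :
    (g⁻¹).perm v = (g.perm (g.actInv v)).symm := rfl

theorem sect_one (x : Fin p) : (1 : TreeAut p).sect x = 1 := rfl

theorem sect_mul (g h : TreeAut p) (x : Fin p) :
    (g * h).sect x = g.sect x * h.sect (g.perm [] x) := rfl

theorem sect_inv (g : TreeAut p) (x : Fin p) :
    (g⁻¹).sect x = (g.sect ((g.perm []).symm x))⁻¹ := rfl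

theorem act_one : ∀ v : List (Fin p), (1 : TreeAut p).act v = v
  | [] => rfl
  | x :: v => by
    show (1 : Equiv.Perm (Fin p)) x :: ((1 : TreeAut p).sect x).act v = x :: v
    rw [sect_one, act_one v]
    rfl

theorem act_mul : ∀ (v : List (Fin p)) (g h : TreeAut p), (g * h).act v = h.act (g.act v)
  | [], _, _ => rfl
  | x :: v, g, h => by
    show (g * h).perm [] x :: ((g * h).sect x).act v = _
    rw [sect_mul, act_mul v]
    rfl

theorem act_inv : ∀ (v : List (Fin p)) (g : TreeAut p), (g⁻¹).act v = g.actInv v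
  | [], _ => rfl
  | x :: v, g => by
    show (g⁻¹).perm [] x :: ((g⁻¹).sect x).act v = _
    rw [sect_inv, act_inv v]
    rfl

instance : Group (TreeAut p) where
  mul_assoc g h k := by
    ext v y
    simp [perm_mul, act_mul, Equiv.trans_apply]
  one_mul g := by
    ext v y
    simp [perm_mul, perm_one, act_one]
  mul_one g := by
    ext v y
    simp [perm_mul, perm_one]
  inv_mul_cancel g := by
    ext v y
    simp [perm_mul, perm_inv, perm_one, act_inv]

end TreeAut

/-- The rooted automorphism `a = (1,…,1)ε`, where `ε = (0 1 … p-1)` is the cyclic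
rotation `x ↦ x + 1` of `Fin p`. -/
def rot (p : ℕ) [NeZero p] : TreeAut p :=
  ⟨fun v => if v = [] then Equiv.addRight (1 : Fin p) else 1⟩

/-- The components of a defining vector `v ∈ (ℤ/pℤ)^{p-1}`, read `p`-periodically:
for `1 ≤ n ≤ p-1`, `vcomp v n` is the `n`-th component of `v` (and `vcomp v n = 0`
when `n ≡ 0 mod p`). -/
def vcomp {p : ℕ} [NeZero p] (v : Fin (p - 1) → ZMod p) (n : ℕ) : ZMod p :=
  if h : n % p = 0 then 0
  else v ⟨n % p - 1, by
    have h2 : n % p < p := Nat.mod_lt _ (Nat.pos_of_ne_zero (NeZero.ne p))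
    omega⟩

/-- `N` is a quasinucleus with constant `k` for the self-similar group generated by the
symmetric set `S`: all sections at level `k` of products of two elements of `S ∪ N` lie in `N`. -/
def IsQuasiNucleusWith (p : ℕ) (S N : Set (TreeAut p)) (k : ℕ) : Prop :=
  ∀ n₁ ∈ S ∪ N, ∀ n₂ ∈ S ∪ N, ∀ v : List (Fin p), v.length = k → (n₁ * n₂).sectV v ∈ N

/-- `N` is the nucleus of the group `G` with symmetric generating set `S`:
`N` is the inclusion-minimal finite subset of `G` that is a quasinucleus for some
level constant `k ≥ 1`. -/
def IsNucleusOf (p : ℕ) (S : Set (TreeAut p)) (G : Subgroup (TreeAut p)) (N : Set (TreeAut p)) : Prop :=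
  (N ⊆ (G : Set (TreeAut p)) ∧ N.Finite ∧ ∃ k, 1 ≤ k ∧ IsQuasiNucleusWith p S N k) ∧
  ∀ N' : Set (TreeAut p), N' ⊆ (G : Set (TreeAut p)) → N'.Finite →
    (∃ k, 1 ≤ k ∧ IsQuasiNucleusWith p S N' k) → N ⊆ N'
/-- The defining wreath recursions of the generators of a multi-EGS group with datum
`E = (E^(1),…,E^(p))`: here Lean's `l : Fin p` stands for the paper's `l = l.val + 1`,
the vector `e l i : Fin (p-1) → ZMod p` is `e^(l)_i` (Lean's `n : Fin (p-1)` standing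
for the component index `n = n.val + 1 ∈ {1,…,p-1}`), each `E^(l)` consists of `r l`
linearly independent vectors, at least one `r l` is positive, and the generator
`b l i = b^(l)_i` fixes all first-level vertices, has section `b^(l)_i` at the vertex
`l - 1` and section `a^{e^(l)_{i,n}}` at the vertex `l - 1 + n (mod p)` for `1 ≤ n ≤ p-1`. -/
def IsMultiEGSDatum (p : ℕ) [NeZero p] {r : Fin p → ℕ}
    (e : ∀ l : Fin p, Fin (r l) → Fin (p - 1) → ZMod p)
    (b : ∀ l : Fin p, Fin (r l) → TreeAut p) : Prop :=
  (∃ l, 0 < r l) ∧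
  (∀ l, LinearIndependent (ZMod p) (e l)) ∧
  (∀ (l : Fin p) (i : Fin (r l)),
    (∀ x : Fin p, (b l i).act [x] = [x]) ∧
    (b l i).sect l = b l i ∧
    ∀ n : Fin (p - 1),
      (b l i).sect (l + @Nat.cast (Fin p) (Fin.NatCast.instNatCast p) (n.val + 1 : ℕ)) = rot p ^ (e l i n).val)

/-- The generating set `{a} ∪ {b^(l)_i}` of a multi-EGS group. -/
def multiEGSGens (p : ℕ) [NeZero p] {r : Fin p → ℕ}
    (b : ∀ l : Fin p, Fin (r l) → TreeAut p) : Set (TreeAut p) :=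
  insert (rot p) {g | ∃ l i, b l i = g}

/-- The multi-EGS group `G_E = ⟨a, b^(l)_i⟩`. -/
def multiEGS (p : ℕ) [NeZero p] {r : Fin p → ℕ}
    (b : ∀ l : Fin p, Fin (r l) → TreeAut p) : Subgroup (TreeAut p) :=
  Subgroup.closure (multiEGSGens p b)

theorem rot_mem_multiEGS (p : ℕ) [NeZero p] {r : Fin p → ℕ}
    (b : ∀ l : Fin p, Fin (r l) → TreeAut p) : rot p ∈ multiEGS p b :=
  Subgroup.subset_closure (Set.mem_insert _ _)

theorem b_mem_multiEGS (p : ℕ) [NeZero p] {r : Fin p → ℕ}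
    (b : ∀ l : Fin p, Fin (r l) → TreeAut p) (l : Fin p) (i : Fin (r l)) :
    b l i ∈ multiEGS p b :=
  Subgroup.subset_closure (Set.mem_insert_of_mem _ ⟨l, i, rfl⟩)

/-- The subgroup `B_l = ⟨b^(l)_1, …, b^(l)_{r_l}⟩`. -/
def Bsub (p : ℕ) [NeZero p] {r : Fin p → ℕ}
    (b : ∀ l : Fin p, Fin (r l) → TreeAut p) (l : Fin p) : Subgroup (TreeAut p) :=
  Subgroup.closure {g | ∃ i, b l i = g}

/-- The set `N_E = ⟨a⟩ ∪ ⋃_{l=1}^p B_l`. -/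
def nucleusSet (p : ℕ) [NeZero p] {r : Fin p → ℕ}
    (b : ∀ l : Fin p, Fin (r l) → TreeAut p) : Set (TreeAut p) :=
  (Subgroup.zpowers (rot p) : Set (TreeAut p)) ∪
    ⋃ l : Fin p, (Bsub p b l : Set (TreeAut p))
/-!
Powers of `a` are rooted automorphisms: all their first-level sections are trivial.
Each `b ∈ B_l` fixes the first level, has its section at `l` in `B_l` and all other
first-level sections in `⟨a⟩`; in particular `N_E` is closed under first-level sections.
Hence a first-level section of `n₁ n₂` has the shape `g m h` with `g, h ∈ ⟨a⟩` and
`m ∈ N_E`, and every first-level section of `g m h` is a first-level section of `m`.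
-/

namespace TreeAut

variable {p : ℕ}

def rooted (p : ℕ) : Subgroup (TreeAut p) where
  carrier := {g | ∀ x, g.sect x = 1}
  one_mem' := sect_one
  mul_mem' {g h} hg hh x := by rw [sect_mul, hg, hh, one_mul]
  inv_mem' {g} hg x := by rw [sect_inv, hg, inv_one]

def stabPi (H : Fin p → Subgroup (TreeAut p)) : Subgroup (TreeAut p) where
  carrier := {g | g.perm [] = 1 ∧ ∀ x, g.sect x ∈ H x}
  one_mem' := ⟨rfl, fun x => by rw [sect_one]; exact one_mem _⟩
  mul_mem' {g h} hg hh := by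
    refine ⟨?_, fun x => ?_⟩
    · rw [perm_mul]
      exact congrArg₂ Equiv.trans hg.1 hh.1
    · rw [sect_mul, hg.1]
      exact mul_mem (hg.2 x) (hh.2 x)
  inv_mem' {g} hg := by
    refine ⟨?_, fun x => ?_⟩
    · rw [perm_inv]
      exact congrArg Equiv.symm hg.1
    · rw [sect_inv, hg.1]
      exact inv_mem (hg.2 x)

end TreeAut

open TreeAut

section MultiEGS

variable {p : ℕ} [NeZero p] {r : Fin p → ℕ}
  {e : ∀ l : Fin p, Fin (r l) → Fin (p - 1) → ZMod p} {b : ∀ l : Fin p, Fin (r l) → TreeAut p}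

theorem zpowers_rot_le_rooted : Subgroup.zpowers (rot p) ≤ rooted p :=
  Subgroup.zpowers_le.mpr fun x => by
    ext v y
    simp [rot, sect, perm_one]

theorem sect_eq_one_of_mem_zpowers_rot {g : TreeAut p} (hg : g ∈ Subgroup.zpowers (rot p))
    (x : Fin p) : g.sect x = 1 :=
  zpowers_rot_le_rooted hg x

theorem Fin.exists_add_natCast_succ_eq {l x : Fin p} (hx : x ≠ l) :
    ∃ n : Fin (p - 1), l + @Nat.cast (Fin p) (Fin.NatCast.instNatCast p) (n.val + 1 : ℕ) = x := by
  have hpos : (x - l).val ≠ 0 := fun h => hx (sub_eq_zero.mp (Fin.ext h))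
  refine ⟨⟨(x - l).val - 1, by omega⟩, ?_⟩
  rw [show (x - l).val - 1 + 1 = (x - l).val by omega, Fin.cast_val_eq_self]
  abel

theorem Bsub_le_stabPi (hdatum : IsMultiEGSDatum p e b) (l : Fin p) :
    Bsub p b l ≤ stabPi fun x => if x = l then Bsub p b l else Subgroup.zpowers (rot p) := by
  rw [Bsub, Subgroup.closure_le]
  rintro _ ⟨i, rfl⟩
  obtain ⟨hfix, hsect_l, hsect_ne⟩ := hdatum.2.2 l i
  refine ⟨Equiv.ext fun x => List.head_eq_of_cons_eq (hfix x), fun x => ?_⟩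
  dsimp only
  split_ifs with hx
  · rw [hx, hsect_l]
    exact Subgroup.subset_closure ⟨i, rfl⟩
  · obtain ⟨n, rfl⟩ := Fin.exists_add_natCast_succ_eq hx
    rw [hsect_ne n]
    exact Subgroup.npow_mem_zpowers _ _

theorem zpowers_rot_subset_nucleusSet :
    (Subgroup.zpowers (rot p) : Set (TreeAut p)) ⊆ nucleusSet p b :=
  Set.subset_union_left

theorem Bsub_subset_nucleusSet (l : Fin p) : (Bsub p b l : Set (TreeAut p)) ⊆ nucleusSet p b :=
  fun _ hg => Or.inr (Set.mem_iUnion.mpr ⟨l, hg⟩)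

theorem sect_mem_ite_of_mem_Bsub (hdatum : IsMultiEGSDatum p e b) {l : Fin p} {g : TreeAut p}
    (hg : g ∈ Bsub p b l) (x : Fin p) :
    g.sect x ∈ if x = l then Bsub p b l else Subgroup.zpowers (rot p) :=
  (Bsub_le_stabPi hdatum l hg).2 x

theorem sect_mem_nucleusSet_of_mem_Bsub (hdatum : IsMultiEGSDatum p e b) {l : Fin p}
    {g : TreeAut p} (hg : g ∈ Bsub p b l) (x : Fin p) : g.sect x ∈ nucleusSet p b := by
  have h := sect_mem_ite_of_mem_Bsub hdatum hg x
  split_ifs at h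
  exacts [Bsub_subset_nucleusSet l h, zpowers_rot_subset_nucleusSet h]

theorem sect_mem_nucleusSet (hdatum : IsMultiEGSDatum p e b) {g : TreeAut p}
    (hg : g ∈ nucleusSet p b) (x : Fin p) : g.sect x ∈ nucleusSet p b := by
  rcases hg with hg | hg
  · rw [sect_eq_one_of_mem_zpowers_rot hg x]
    exact zpowers_rot_subset_nucleusSet (one_mem _)
  · obtain ⟨l, hg⟩ := Set.mem_iUnion.mp hg
    exact sect_mem_nucleusSet_of_mem_Bsub hdatum hg x

theorem exists_sect_mul_sect_eq_of_mem_Bsub (hdatum : IsMultiEGSDatum p e b)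
    {l₁ l₂ : Fin p} {g₁ g₂ : TreeAut p} (hg₁ : g₁ ∈ Bsub p b l₁) (hg₂ : g₂ ∈ Bsub p b l₂)
    (x : Fin p) :
    ∃ g ∈ Subgroup.zpowers (rot p), ∃ m ∈ nucleusSet p b, ∃ h ∈ Subgroup.zpowers (rot p),
      g₁.sect x * g₂.sect x = g * m * h := by
  have h₁ := sect_mem_ite_of_mem_Bsub hdatum hg₁ x
  have h₂ := sect_mem_ite_of_mem_Bsub hdatum hg₂ x
  split_ifs at h₁ h₂ with hx₁ hx₂ hx₂
  · subst hx₁ hx₂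
    exact ⟨1, one_mem _, _, Bsub_subset_nucleusSet x (mul_mem h₁ h₂), 1, one_mem _, by simp⟩
  · exact ⟨1, one_mem _, _, Bsub_subset_nucleusSet l₁ h₁, _, h₂, by simp⟩
  all_goals exact ⟨_, h₁, _, sect_mem_nucleusSet_of_mem_Bsub hdatum hg₂ x, 1, one_mem _, by simp⟩

theorem exists_sect_mul_eq (hdatum : IsMultiEGSDatum p e b) {n₁ n₂ : TreeAut p}
    (h₁ : n₁ ∈ nucleusSet p b) (h₂ : n₂ ∈ nucleusSet p b) (x : Fin p) :
    ∃ g ∈ Subgroup.zpowers (rot p), ∃ m ∈ nucleusSet p b, ∃ h ∈ Subgroup.zpowers (rot p),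
      (n₁ * n₂).sect x = g * m * h := by
  rw [sect_mul]
  rcases h₁ with h₁ | h₁
  · rw [sect_eq_one_of_mem_zpowers_rot h₁ x]
    exact ⟨1, one_mem _, _, sect_mem_nucleusSet hdatum h₂ (n₁.perm [] x), 1, one_mem _, by simp⟩
  obtain ⟨l₁, h₁⟩ := Set.mem_iUnion.mp h₁
  rw [(Bsub_le_stabPi hdatum l₁ h₁).1, Equiv.Perm.one_apply]
  rcases h₂ with h₂ | h₂
  · rw [sect_eq_one_of_mem_zpowers_rot h₂ x]
    exact ⟨1, one_mem _, _, sect_mem_nucleusSet_of_mem_Bsub hdatum h₁ x, 1, one_mem _, by simp⟩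
  obtain ⟨l₂, h₂⟩ := Set.mem_iUnion.mp h₂
  exact exists_sect_mul_sect_eq_of_mem_Bsub hdatum h₁ h₂ x

theorem sect_zpowers_mul_mul_zpowers_mem_nucleusSet (hdatum : IsMultiEGSDatum p e b)
    {g m h : TreeAut p} (hg : g ∈ Subgroup.zpowers (rot p)) (hm : m ∈ nucleusSet p b)
    (hh : h ∈ Subgroup.zpowers (rot p)) (y : Fin p) : (g * m * h).sect y ∈ nucleusSet p b := by
  rw [sect_mul, sect_mul, sect_eq_one_of_mem_zpowers_rot hg, sect_eq_one_of_mem_zpowers_rot hh,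
    one_mul, mul_one]
  exact sect_mem_nucleusSet hdatum hm _

end MultiEGS

theorem multiEGS_quasinucleus_level_two_general (p : ℕ) [NeZero p]
    (r : Fin p → ℕ)
    (e : ∀ l : Fin p, Fin (r l) → Fin (p - 1) → ZMod p)
    (b : ∀ l : Fin p, Fin (r l) → TreeAut p)
    (hdatum : IsMultiEGSDatum p e b) :
    ∀ n₁ ∈ nucleusSet p b, ∀ n₂ ∈ nucleusSet p b,
      ∀ v : List (Fin p), v.length = 2 → (n₁ * n₂).sectV v ∈ nucleusSet p b := by
  intro n₁ h₁ n₂ h₂ v hv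
  obtain ⟨x, y, rfl⟩ := List.length_eq_two.mp hv
  obtain ⟨g, hg, m, hm, h, hh, hsect⟩ := exists_sect_mul_eq hdatum h₁ h₂ x
  show ((n₁ * n₂).sect x).sect y ∈ nucleusSet p b
  rw [hsect]
  exact sect_zpowers_mul_mul_zpowers_mem_nucleusSet hdatum hg hm hh y

/-- **`N_E` is a quasinucleus with constant `k = 2`.** For an odd prime `p` and a
multi-EGS group `G_E`, the set `N_E = ⟨a⟩ ∪ ⋃_{l=1}^p B_l` satisfies: for all
`n₁, n₂ ∈ N_E` and every word `v` of length `2`, the section `(n₁n₂)|_v` belongs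
to `N_E`. -/
theorem multiEGS_quasinucleus_level_two (p : ℕ) [Fact p.Prime] [NeZero p] (hp : Odd p)
    (r : Fin p → ℕ)
    (e : ∀ l : Fin p, Fin (r l) → Fin (p - 1) → ZMod p)
    (b : ∀ l : Fin p, Fin (r l) → TreeAut p)
    (hdatum : IsMultiEGSDatum p e b) :
    ∀ n₁ ∈ nucleusSet p b, ∀ n₂ ∈ nucleusSet p b,
      ∀ v : List (Fin p), v.length = 2 → (n₁ * n₂).sectV v ∈ nucleusSet p b :=
  multiEGS_quasinucleus_level_two_general p r e b hdatum
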